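/- arXiv:1503.00564 — 7 statements merged into one kernel-verified Lean document; each statement's English description precedes it below -/
import Mathlib

section
/- If p and p' are both pivots for a realm 𝔯 of a scalable monoid X over R, and x = αp = α'p', y = βp = β'p' for x, y in 𝔯, then (α+β)p = (α'+β')p'. Hence the sum x + y := (α+β)p is well-defined independently of the choice of pivot. -/
/-- A scalable monoid `X` over a commutative unital ring `R`: a monoid with a
scalar multiplication satisfying `1 • x = x`, `α • (β • x) = (α*β) • x` and
`α • (x*y) = (α • x) * y = x * (α • y)`. -/
class ScalableMonoid (R X : Type*) [CommRing R] [Monoid X] extends SMul R X where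
  one_smul : ∀ x : X, (1 : R) • x = x
  mul_smul : ∀ (α β : R) (x : X), α • β • x = (α * β) • x
  smul_mul_assoc : ∀ (α : R) (x y : X), α • (x * y) = (α • x) * y
  mul_smul_comm : ∀ (α : R) (x y : X), α • (x * y) = x * (α • y)

/-- Commensurability: `x ∼ y` iff `α • x = β • y` for some scalars `α β`. -/
def Commen (R : Type*) {X : Type*} [CommRing R] [Monoid X] [ScalableMonoid R X]
    (x y : X) : Prop :=
  ∃ α β : R, α • x = β • y

/-- `p` is a pivot for the set `S`: `p ∈ S` and every `x ∈ S` is uniquely `λ • p`. -/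
def IsPivot (R : Type*) {X : Type*} [CommRing R] [Monoid X] [ScalableMonoid R X]
    (p : X) (S : Set X) : Prop :=
  p ∈ S ∧ ∀ x ∈ S, ∃! lam : R, x = lam • p

theorem pivot_sum_well_defined {R X : Type*} [CommRing R] [Monoid X] [ScalableMonoid R X]
    {S : Set X} (hS : ∃ z : X, S = {w | Commen R w z})
    {p p' : X} (hp : IsPivot R p S) (hp' : IsPivot R p' S)
    {x y : X} (hx : x ∈ S) (hy : y ∈ S) {a a' b b' : R}
    (hxa : x = a • p) (hxa' : x = a' • p') (hyb : y = b • p) (hyb' : y = b' • p') :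
    (a + b) • p = (a' + b') • p' := by
  obtain ⟨c, hc, _⟩ := hp.2 p' hp'.1
  have key : ∀ {z : X} {u v : R}, z ∈ S → z = u • p → z = v • p' → u = v * c := by
    intro z u v hz hu hv
    obtain ⟨l, _, hl⟩ := hp.2 z hz
    have h2 : z = (v * c) • p := by
      rw [hv, hc, ScalableMonoid.mul_smul]
    rw [hl u hu, hl (v * c) h2]
  have ha : a = a' * c := key hx hxa hxa'
  have hb : b = b' * c := key hy hyb hyb'
  rw [ha, hb, hc, ScalableMonoid.mul_smul, add_mul]
end

section
/- Let X be a quantity space over a field K with basis {b₁,…,bₙ}, and let x = μ∏bᵢ^{kᵢ}, y = ν∏bᵢ^{ℓᵢ}. Then the following are equivalent: (1) x ∼ y; (2) kᵢ = ℓᵢ for all i; (3) νx = μy. -/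
/-- A (finite) basis for a commutative scalable monoid over a field `K`:
a family of invertible elements such that every `x` has a unique expansion
`x = μ • ∏ i, b i ^ k i` with `μ ∈ K` and integer exponents `k i`. -/
def IsBasis (K : Type*) {X : Type*} [Field K] [CommMonoid X] [ScalableMonoid K X]
    {n : ℕ} (b : Fin n → Xˣ) : Prop :=
  ∀ x : X, ∃! p : K × (Fin n → ℤ), x = p.1 • ((∏ i, b i ^ p.2 i : Xˣ) : X)

theorem commen_iff_same_exponents {K X : Type*} [Field K] [CommMonoid X] [ScalableMonoid K X]
    {n : ℕ} {b : Fin n → Xˣ} (hB : IsBasis K b)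
    {x y : X} {mu nu : K} {k l : Fin n → ℤ}
    (hx : x = mu • ((∏ i, b i ^ k i : Xˣ) : X))
    (hy : y = nu • ((∏ i, b i ^ l i : Xˣ) : X)) :
    (Commen K x y ↔ ∀ i, k i = l i) ∧ (Commen K x y ↔ nu • x = mu • y) := by
  have hss : ∀ (α β : K) (z : X), α • β • z = (α * β) • z := ScalableMonoid.mul_smul
  have h12 : Commen K x y → ∀ i, k i = l i := by
    rintro ⟨α, β, hab⟩
    have hz1 : α • x = (α * mu) • ((∏ i, b i ^ k i : Xˣ) : X) := by rw [hx, hss]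
    have hz2 : β • y = (β * nu) • ((∏ i, b i ^ l i : Xˣ) : X) := by rw [hy, hss]
    obtain ⟨p, _, hu⟩ := hB (α • x)
    have e1 := hu (α * mu, k) hz1
    have e2 := hu (β * nu, l) (hab.trans hz2)
    have e := e1.trans e2.symm
    intro i
    have := congrArg (fun q : K × (Fin n → ℤ) => q.2 i) e
    simpa using this
  have h23 : (∀ i, k i = l i) → nu • x = mu • y := by
    intro h
    have hk : k = l := funext h
    subst hk
    rw [hx, hy, hss, hss, mul_comm]
  exact ⟨⟨h12, fun h => ⟨nu, mu, h23 h⟩⟩,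
    ⟨fun h => h23 (h12 h), fun h => ⟨nu, mu, h⟩⟩⟩
end

section
/- In a quantity space X over a field K with basis B, the measure map is multiplicative: μ_B(xy) = μ_B(x)μ_B(y) for all x, y ∈ X. -/
/-- The qMeasure of `x` relative to the basis `b`: the unique scalar in its expansion. -/
noncomputable def qMeasure {K X : Type*} [Field K] [CommMonoid X] [ScalableMonoid K X]
    {n : ℕ} {b : Fin n → Xˣ} (hB : IsBasis K b) (x : X) : K :=
  (hB x).exists.choose.1

theorem qMeasure_mul {K X : Type*} [Field K] [CommMonoid X] [ScalableMonoid K X]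
    {n : ℕ} {b : Fin n → Xˣ} (hB : IsBasis K b) (x y : X) :
    qMeasure hB (x * y) = qMeasure hB x * qMeasure hB y := by
  have hx := (hB x).exists.choose_spec
  have hy := (hB y).exists.choose_spec
  set px := (hB x).exists.choose with hpx
  set py := (hB y).exists.choose with hpy
  set q : K × (Fin n → ℤ) := (px.1 * py.1, fun i => px.2 i + py.2 i) with hq
  have key : x * y = q.1 • ((∏ i, b i ^ q.2 i : Xˣ) : X) := by
    have hprod : ((∏ i, b i ^ q.2 i : Xˣ) : X)
        = ((∏ i, b i ^ px.2 i : Xˣ) : X) * ((∏ i, b i ^ py.2 i : Xˣ) : X) := by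
      rw [← Units.val_mul, ← Finset.prod_mul_distrib]
      congr 1
      exact Finset.prod_congr rfl fun i _ => (zpow_add (b i) (px.2 i) (py.2 i))
    rw [hprod, hx, hy]
    calc (px.1 • ((∏ i, b i ^ px.2 i : Xˣ) : X)) * (py.1 • ((∏ i, b i ^ py.2 i : Xˣ) : X))
        = px.1 • (((∏ i, b i ^ px.2 i : Xˣ) : X) * (py.1 • ((∏ i, b i ^ py.2 i : Xˣ) : X))) :=
          (ScalableMonoid.smul_mul_assoc _ _ _).symm
      _ = px.1 • py.1 • (((∏ i, b i ^ px.2 i : Xˣ) : X) * ((∏ i, b i ^ py.2 i : Xˣ) : X)) :=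
          congrArg (px.1 • ·) (ScalableMonoid.mul_smul_comm _ _ _).symm
      _ = q.1 • (((∏ i, b i ^ px.2 i : Xˣ) : X) * ((∏ i, b i ^ py.2 i : Xˣ) : X)) :=
          ScalableMonoid.mul_smul _ _ _
  have huniq : (hB (x * y)).exists.choose = q :=
    (hB (x * y)).unique (hB (x * y)).exists.choose_spec key
  show (hB (x * y)).exists.choose.1 = px.1 * py.1
  rw [huniq]
end

section
/- In a quantity space X over a field K, for every x commensurable with the unit 1 (i.e., x ∈ [1]), the measure μ_B(x) is the same for every basis B of X. -/
theorem qMeasure_aux {K X : Type*} [Field K] [CommMonoid X] [ScalableMonoid K X]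
    {n : ℕ} {b : Fin n → Xˣ} (hB : IsBasis K b) {x : X} (hx : Commen K x (1 : X)) :
    x = qMeasure hB x • (1 : X) := by
  obtain ⟨α, β, hαβ⟩ := hx
  have hp : x = qMeasure hB x •
      ((∏ i, b i ^ (hB x).exists.choose.2 i : Xˣ) : X) := (hB x).exists.choose_spec
  have h1 : α • x = (α * qMeasure hB x, (hB x).exists.choose.2).1 •
      ((∏ i, b i ^ (α * qMeasure hB x, (hB x).exists.choose.2).2 i : Xˣ) : X) := by
    conv_lhs => rw [hp]
    rw [ScalableMonoid.mul_smul]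
  have h2 : α • x = (β, (0 : Fin n → ℤ)).1 •
      ((∏ i, b i ^ (β, (0 : Fin n → ℤ)).2 i : Xˣ) : X) := by
    simpa using hαβ
  have huniq := (hB (α • x)).unique h1 h2
  have hsnd : (hB x).exists.choose.2 = 0 := congrArg Prod.snd huniq
  conv_lhs => rw [hp, hsnd]
  simp

theorem qMeasure_dimensionless_basis_independent {K X : Type*} [Field K] [CommMonoid X]
    [ScalableMonoid K X] {n m : ℕ} {b : Fin n → Xˣ} {c : Fin m → Xˣ}
    (hB : IsBasis K b) (hC : IsBasis K c) {x : X} (hx : Commen K x (1 : X)) :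
    qMeasure hB x = qMeasure hC x := by
  have hb := qMeasure_aux hB hx
  have hc := qMeasure_aux hC hx
  have h1 : x = (qMeasure hB x, (0 : Fin n → ℤ)).1 •
      ((∏ i, b i ^ (qMeasure hB x, (0 : Fin n → ℤ)).2 i : Xˣ) : X) := by
    simpa using hb
  have h2 : x = (qMeasure hC x, (0 : Fin n → ℤ)).1 •
      ((∏ i, b i ^ (qMeasure hC x, (0 : Fin n → ℤ)).2 i : Xˣ) : X) := by
    simpa using hc
  have := (hB x).unique h1 h2
  exact congrArg Prod.fst this
end

section
/- In a quantity space X over a field K, if x is invertible and y ∼ x, then y = κx for some κ ∈ K; moreover if λx = λ'x for an invertible x then λ = λ'. Consequently every invertible quantity is a pivot for its realm. -/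
section Aux

variable {K X : Type*} [Field K] [CommMonoid X] [ScalableMonoid K X]

private lemma sm_one_smul (x : X) : (1 : K) • x = x := ScalableMonoid.one_smul x
private lemma sm_mul_smul (α β : K) (x : X) : α • β • x = (α * β) • x :=
  ScalableMonoid.mul_smul α β x
private lemma sm_smul_mul (α : K) (x y : X) : α • (x * y) = (α • x) * y :=
  ScalableMonoid.smul_mul_assoc α x y

/-- If `x = 0 • z` for some `z`, then `x` is not a unit. -/
private lemma not_unit_of_zero_smul {n : ℕ} {b : Fin n → Xˣ} (hB : IsBasis K b)
    (z : X) : ¬ IsUnit ((0 : K) • z) := by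
  rintro ⟨u, hu⟩
  have h1 : ((0:K) • z) * ((u⁻¹ : Xˣ) : X) = 1 := by
    rw [← hu]; exact u.mul_inv
  obtain ⟨⟨ν, m⟩, hrep, _⟩ := hB (z * ((u⁻¹ : Xˣ) : X))
  have e1 : (1 : X) = (0 : K) • ((∏ i, b i ^ m i : Xˣ) : X) := by
    calc (1 : X) = (0:K) • (z * ((u⁻¹ : Xˣ) : X)) := by rw [sm_smul_mul, h1]
    _ = (0:K) • (ν • ((∏ i, b i ^ m i : Xˣ) : X)) := by rw [← hrep]
    _ = (0 * ν) • _ := sm_mul_smul _ _ _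
    _ = (0 : K) • _ := by rw [zero_mul]
  have e2 : (1 : X) = (1 : K) • ((∏ i, b i ^ (fun _ : Fin n => (0:ℤ)) i : Xˣ) : X) := by
    simp [sm_one_smul]
  obtain ⟨p, _, hpuniq⟩ := hB (1 : X)
  have h0 : ((0 : K), m) = p := (hpuniq ((0:K), m) e1).symm ▸ rfl
  have hq : ((1 : K), (fun _ : Fin n => (0:ℤ))) = p := hpuniq _ e2
  have : (0 : K) = 1 := by
    have := h0.trans hq.symm
    exact congrArg Prod.fst this
  exact zero_ne_one this

end Aux

theorem invertible_is_pivot {K X : Type*} [Field K] [CommMonoid X] [ScalableMonoid K X]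
    {n : ℕ} {b : Fin n → Xˣ} (hB : IsBasis K b) (x : X) (hx : IsUnit x) :
    (∀ y : X, Commen K y x → ∃ kappa : K, y = kappa • x) ∧
    (∀ lam lam' : K, lam • x = lam' • x → lam = lam') ∧
    IsPivot K x {y | Commen K y x} := by
  obtain ⟨⟨μ, k⟩, hxrep, _⟩ := hB x
  have hμ : μ ≠ 0 := by
    intro h0
    apply not_unit_of_zero_smul hB ((∏ i, b i ^ k i : Xˣ) : X)
    rwa [← h0, ← hxrep]
  -- injectivity of scalar multiplication on x
  have hinj : ∀ lam lam' : K, lam • x = lam' • x → lam = lam' := by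
    intro lam lam' h
    have h1 : lam • x = (lam * μ) • ((∏ i, b i ^ k i : Xˣ) : X) := by
      rw [hxrep, sm_mul_smul]
    have h2 : lam • x = (lam' * μ) • ((∏ i, b i ^ k i : Xˣ) : X) := by
      rw [h, hxrep, sm_mul_smul]
    obtain ⟨p, _, hpuniq⟩ := hB (lam • x)
    have e1 := hpuniq ((lam * μ), k) h1
    have e2 := hpuniq ((lam' * μ), k) h2
    have : lam * μ = lam' * μ := congrArg Prod.fst (e1.trans e2.symm)
    exact mul_right_cancel₀ hμ this
  -- every commensurable y is a multiple of x
  have hmul : ∀ y : X, Commen K y x → ∃ kappa : K, y = kappa • x := by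
    rintro y ⟨α, β, hab⟩
    by_cases hα : α = 0
    · subst hα
      by_cases hβ : β = 0
      · -- 0 • y = 0 • x : same exponent vector
        subst hβ
        obtain ⟨⟨ν, m⟩, hyrep, _⟩ := hB y
        have hy0 : (0:K) • y = (0:K) • ((∏ i, b i ^ m i : Xˣ) : X) := by
          rw [hyrep, sm_mul_smul, zero_mul]
        have hx0 : (0:K) • y = (0:K) • ((∏ i, b i ^ k i : Xˣ) : X) := by
          rw [hab, hxrep, sm_mul_smul, zero_mul]
        obtain ⟨p, _, hpuniq⟩ := hB ((0:K) • y)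
        have e1 := hpuniq ((0:K), m) hy0
        have e2 := hpuniq ((0:K), k) hx0
        have hmk : m = k := congrArg Prod.snd (e1.trans e2.symm)
        refine ⟨ν * μ⁻¹, ?_⟩
        calc y = ν • ((∏ i, b i ^ k i : Xˣ) : X) := by rw [hyrep, hmk]
        _ = ν • ((μ⁻¹ * μ) • ((∏ i, b i ^ k i : Xˣ) : X)) := by
            rw [inv_mul_cancel₀ hμ, sm_one_smul]
        _ = ν • μ⁻¹ • μ • ((∏ i, b i ^ k i : Xˣ) : X) := by rw [sm_mul_smul μ⁻¹]
        _ = ν • μ⁻¹ • x := by rw [← hxrep]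
        _ = (ν * μ⁻¹) • x := sm_mul_smul _ _ _
      · -- 0 • y = β • x with β ≠ 0 : then x = 0 • y, contradicting x unit
        exfalso
        have hx0 : x = (0:K) • y := by
          calc x = (1:K) • x := (sm_one_smul x).symm
          _ = (β⁻¹ * β) • x := by rw [inv_mul_cancel₀ hβ]
          _ = β⁻¹ • β • x := (sm_mul_smul _ _ _).symm
          _ = β⁻¹ • (0:K) • y := by rw [← hab]
          _ = (β⁻¹ * 0) • y := sm_mul_smul _ _ _
          _ = (0:K) • y := by rw [mul_zero]
        exact not_unit_of_zero_smul hB y (hx0 ▸ hx)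
    · refine ⟨α⁻¹ * β, ?_⟩
      calc y = (1:K) • y := (sm_one_smul y).symm
      _ = (α⁻¹ * α) • y := by rw [inv_mul_cancel₀ hα]
      _ = α⁻¹ • α • y := (sm_mul_smul _ _ _).symm
      _ = α⁻¹ • β • x := by rw [hab]
      _ = (α⁻¹ * β) • x := sm_mul_smul _ _ _
  refine ⟨hmul, hinj, ⟨⟨1, 1, rfl⟩, ?_⟩⟩
  intro y hy
  obtain ⟨κ, hκ⟩ := hmul y hy
  exact ⟨κ, hκ, fun κ' hκ' => hinj κ' κ (hκ'.symm.trans hκ)⟩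
end

section
/- Every realm (commensurability class) of a quantity space over a field K contains an invertible element, and hence has a pivot. -/
theorem realm_has_pivot {K X : Type*} [Field K] [CommMonoid X] [ScalableMonoid K X]
    {n : ℕ} {b : Fin n → Xˣ} (hB : IsBasis K b) (x : X) :
    ∃ p : X, Commen K p x ∧ IsUnit p ∧ IsPivot K p {y | Commen K y x} := by
  obtain ⟨⟨μ, k⟩, hx, hxu⟩ := hB x
  refine ⟨((∏ i, b i ^ k i : Xˣ) : X), ⟨μ, 1, ?_⟩, Units.isUnit _, ⟨μ, 1, ?_⟩, ?_⟩
  · rw [ScalableMonoid.one_smul]; exact hx.symm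
  · rw [ScalableMonoid.one_smul]; exact hx.symm
  · intro y hy
    obtain ⟨⟨ν, m⟩, hy', hyu⟩ := hB y
    obtain ⟨α, β, hab⟩ := hy
    have h1 : (α * ν) • ((∏ i, b i ^ m i : Xˣ) : X)
        = (β * μ) • ((∏ i, b i ^ k i : Xˣ) : X) := by
      rw [← ScalableMonoid.mul_smul, ← ScalableMonoid.mul_smul, ← hy', ← hx]; exact hab
    have hmk : ((α * ν, m) : K × (Fin n → ℤ)) = (β * μ, k) := by
      obtain ⟨⟨γ, l⟩, _, hu⟩ := hB ((β * μ) • ((∏ i, b i ^ k i : Xˣ) : X))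
      exact (hu _ h1.symm).trans (hu _ rfl).symm
    have hm : m = k := congrArg Prod.snd hmk
    rw [hm] at hy' hyu
    refine ⟨ν, hy', fun lam hlam => ?_⟩
    exact congrArg Prod.fst (hyu (lam, k) hlam)
end

section
/- In a quantity space X over a field K, the quotient monoid X/∼ by commensurability is a group: every dimension [x] has a unique inverse [x]⁻¹ with [x][x]⁻¹ = [x]⁻¹[x] = [1]. -/
lemma commen_refl {R X : Type*} [CommRing R] [Monoid X] [ScalableMonoid R X] (x : X) :
    Commen R x x := ⟨1, 1, rfl⟩

lemma commen_symm {R X : Type*} [CommRing R] [Monoid X] [ScalableMonoid R X] {x y : X}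
    (h : Commen R x y) : Commen R y x := by
  obtain ⟨a, b, h⟩ := h; exact ⟨b, a, h.symm⟩

lemma commen_trans {R X : Type*} [CommRing R] [Monoid X] [ScalableMonoid R X] {x y z : X}
    (h1 : Commen R x y) (h2 : Commen R y z) : Commen R x z := by
  obtain ⟨a, b, h1⟩ := h1
  obtain ⟨c, d, h2⟩ := h2
  refine ⟨c * a, b * d, ?_⟩
  calc (c * a) • x = c • a • x := (ScalableMonoid.mul_smul c a x).symm
    _ = c • b • y := by rw [h1]
    _ = (c * b) • y := ScalableMonoid.mul_smul c b y
    _ = (b * c) • y := by rw [mul_comm]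
    _ = b • c • y := (ScalableMonoid.mul_smul b c y).symm
    _ = b • d • z := by rw [h2]
    _ = (b * d) • z := ScalableMonoid.mul_smul b d z

/-- Commensurability as a setoid on `X`. -/
def commSetoid (R X : Type*) [CommRing R] [Monoid X] [ScalableMonoid R X] : Setoid X :=
  ⟨Commen R, ⟨commen_refl, commen_symm, commen_trans⟩⟩

lemma smul_mul_smul' {R X : Type*} [CommRing R] [Monoid X] [ScalableMonoid R X]
    (a b : R) (x y : X) : (a • x) * (b • y) = (a * b) • (x * y) := by
  calc (a • x) * (b • y) = a • (x * (b • y)) := (ScalableMonoid.smul_mul_assoc a x (b • y)).symm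
    _ = a • b • (x * y) := by rw [← ScalableMonoid.mul_smul_comm]
    _ = (a * b) • (x * y) := ScalableMonoid.mul_smul a b (x * y)

/-- Multiplication on the quotient `X/∼`, given by `[x][y] = [xy]`. -/
def qmul {R X : Type*} [CommRing R] [Monoid X] [ScalableMonoid R X] :
    Quotient (commSetoid R X) → Quotient (commSetoid R X) → Quotient (commSetoid R X) :=
  Quotient.map₂ (· * ·) (by
    rintro x x' ⟨a, a', hx⟩ y y' ⟨b, b', hy⟩
    exact ⟨a * b, a' * b', by rw [← smul_mul_smul', ← smul_mul_smul', hx, hy]⟩)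

/-- The unit of the quotient `X/∼`. -/
def qone {R X : Type*} [CommRing R] [Monoid X] [ScalableMonoid R X] :
    Quotient (commSetoid R X) :=
  Quotient.mk (commSetoid R X) (1 : X)

/-- In a quantity space, every dimension `[x]` in `X/∼` has a unique inverse:
the quotient monoid is a group. -/
theorem quotient_group {K X : Type*} [Field K] [CommMonoid X] [ScalableMonoid K X]
    {n : ℕ} {b : Fin n → Xˣ} (hB : IsBasis K b) (d : Quotient (commSetoid K X)) :
    ∃! e : Quotient (commSetoid K X), qmul d e = qone ∧ qmul e d = qone := by
  induction d using Quotient.inductionOn with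
  | h x =>
  obtain ⟨⟨μ, k⟩, hx, -⟩ := hB x
  set u : Xˣ := ∏ i, b i ^ k i with hu
  set v : Xˣ := ∏ i, b i ^ (-k i) with hv
  have huv : (u : X) * (v : X) = 1 := by
    rw [← Units.val_mul]
    have : u * v = 1 := by
      rw [hu, hv, ← Finset.prod_mul_distrib]
      simp [← zpow_add]
    rw [this, Units.val_one]
  have hmk : ∀ a c : X, qmul (Quotient.mk (commSetoid K X) a)
      (Quotient.mk (commSetoid K X) c) = Quotient.mk (commSetoid K X) (a * c) :=
    fun a c => rfl
  have hinv : qmul (Quotient.mk (commSetoid K X) x) (Quotient.mk (commSetoid K X) (v : X))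
      = qone := by
    rw [hmk]
    apply Quotient.sound
    refine ⟨1, μ, ?_⟩
    rw [ScalableMonoid.one_smul, hx, ← ScalableMonoid.smul_mul_assoc, huv]
  refine ⟨Quotient.mk (commSetoid K X) (v : X), ⟨hinv, ?_⟩, ?_⟩
  · rw [hmk, mul_comm, ← hmk, hinv]
  · intro e ⟨h1, _⟩
    induction e using Quotient.inductionOn with
    | h y =>
    obtain ⟨⟨ν, m⟩, hy, -⟩ := hB y
    rw [hmk] at h1
    obtain ⟨α, β, hαβ⟩ := Quotient.exact h1
    have e1 : α • (x * y) = (α * (μ * ν)) • ((∏ i, b i ^ (k i + m i) : Xˣ) : X) := by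
      have : (∏ i, b i ^ (k i + m i) : Xˣ) = u * (∏ i, b i ^ m i) := by
        rw [hu, ← Finset.prod_mul_distrib]
        simp [zpow_add]
      rw [this, Units.val_mul, hx, hy, smul_mul_smul', ScalableMonoid.mul_smul]
    have e2 : α • (x * y) = β • ((∏ i, b i ^ ((fun _ => (0:ℤ)) i) : Xˣ) : X) := by
      rw [hαβ]
      simp
    obtain ⟨p, -, hp⟩ := hB (α • (x * y))
    have := (hp (α * (μ * ν), fun i => k i + m i) e1).trans (hp (β, fun _ => (0:ℤ)) e2).symm
    have hkm : ∀ i, m i = -k i := by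
      intro i
      have := congrFun (congrArg Prod.snd this) i
      simp at this
      linarith
    apply Quotient.sound
    refine ⟨1, ν, ?_⟩
    rw [ScalableMonoid.one_smul, hy]
    congr 2
    rw [hv]
    exact Finset.prod_congr rfl fun i _ => by simp [hkm i]
end
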